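/- arXiv:1012.2876 — 4 statements merged into one kernel-verified Lean document; each statement's English description precedes it below -/
import Mathlib

section
/- If x, y, z are purely imaginary unit quaternions satisfying y = x · exp(z·α) for some real α with sin(α) ≠ 0, then z is perpendicular to x (their Euclidean inner product in ℝ³ is zero). -/
theorem Quaternion.re_mul_coe_add_smul_of_re_eq_zero {R : Type*} [CommRing R]
    (x z : Quaternion R) (c s : R) (hx : x.re = 0) :
    (x * ((c : Quaternion R) + s • z)).re =
      -s * (z.imI * x.imI + z.imJ * x.imJ + z.imK * x.imK) := by
  simp only [Quaternion.re_mul, hx, Quaternion.imI_add, Quaternion.imI_coe, Quaternion.imI_smul,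
    Quaternion.imJ_add, Quaternion.imJ_coe, Quaternion.imJ_smul, Quaternion.imK_add,
    Quaternion.imK_coe, Quaternion.imK_smul, smul_eq_mul]
  ring

theorem perp_of_eq_mul_exp_general (x y z : Quaternion ℝ)
    (hx : x.re = 0) (hy : y.re = 0)
    (α : ℝ) (hα : Real.sin α ≠ 0)
    (h : y = x * (((Real.cos α : ℝ) : Quaternion ℝ) + (Real.sin α) • z)) :
    z.imI * x.imI + z.imJ * x.imJ + z.imK * x.imK = 0 := by
  have hre := congrArg QuaternionAlgebra.re h
  rw [hy, Quaternion.re_mul_coe_add_smul_of_re_eq_zero _ _ _ _ hx, eq_comm, neg_mul,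
    neg_eq_zero] at hre
  exact (mul_eq_zero.mp hre).resolve_left hα

/-- If `x`, `y`, `z` are purely imaginary unit quaternions satisfying
`y = x * exp(z * α)` for some real `α` with `sin α ≠ 0`, then `z` is perpendicular to
`x`: their Euclidean inner product in `ℝ³ = span(i,j,k)` is zero.  Here, for a purely
imaginary unit quaternion `z`, `exp (z * α) = cos α + (sin α) • z`. -/
theorem perp_of_eq_mul_exp (x y z : Quaternion ℝ)
    (hx : x.re = 0) (hy : y.re = 0) (hz : z.re = 0)
    (hx1 : ‖x‖ = 1) (hy1 : ‖y‖ = 1) (hz1 : ‖z‖ = 1)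
    (α : ℝ) (hα : Real.sin α ≠ 0)
    (h : y = x * (((Real.cos α : ℝ) : Quaternion ℝ) + (Real.sin α) • z)) :
    z.imI * x.imI + z.imJ * x.imJ + z.imK * x.imK = 0 :=
  perp_of_eq_mul_exp_general x y z hx hy α hα h
end

section
/- Let G be a group, ρ : G → SU(2) a homomorphism, and ξ : G → su(2) a cocycle at ρ, i.e., ξ(gh) = ξ(g) + Ad_{ρ(g)}(ξ(h)) for all g, h ∈ G. If c ∈ G is central and ρ is non-abelian (i.e., there exist g, h with ρ(g)ρ(h) ≠ ρ(h)ρ(g)), then ξ(c) is fixed by Ad_{ρ(g)} for all g. Moreover, if additionally ρ(c) is central in SU(2), then ξ(c) = 0. -/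
/-!
Two quaternions commute exactly when their imaginary parts have vanishing cross product, so a
quaternion commuting with two non-commuting ones is real. Since `c` is central and `ρ` is
non-abelian, `ρ c` is therefore real, hence central in `ℍ`; comparing the cocycle relation at
`g * c` and at `c * g` then shows that `Ad_{ρ g}` fixes `ξ c`. Thus `ξ c` commutes with `ρ(G)`
as well, so it is real, and being purely imaginary it vanishes.
-/

open Matrix

theorem cross_eq_zero_of_cross_eq_zero {F : Type*} [Field F] {u v w : Fin 3 → F}
    (hu : u ≠ 0) (hv : u ⨯₃ v = 0) (hw : u ⨯₃ w = 0) : v ⨯₃ w = 0 := by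
  have smul_of_cross_eq_zero {x : Fin 3 → F} (hx : u ⨯₃ x = 0) : ∃ a : F, a • u = x := by
    simpa [LinearIndependent.pair_iff' hu] using
      mt crossProduct_ne_zero_iff_linearIndependent.mpr (not_not.mpr hx)
  obtain ⟨a, rfl⟩ := smul_of_cross_eq_zero hv
  obtain ⟨b, rfl⟩ := smul_of_cross_eq_zero hw
  simp [cross_self]

namespace Quaternion

variable {R : Type*} [Field R]

def imVec (a : ℍ[R]) : Fin 3 → R := ![a.imI, a.imJ, a.imK]

theorem imVec_eq_zero_iff {a : ℍ[R]} : a.imVec = 0 ↔ a.im = 0 := by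
  simp [imVec, Quaternion.ext_iff]

variable [NeZero (2 : R)]

theorem commute_iff_imVec_cross_eq_zero {a b : ℍ[R]} :
    Commute a b ↔ a.imVec ⨯₃ b.imVec = 0 := by
  simp only [commute_iff_eq, Quaternion.ext_iff, re_mul, imI_mul, imJ_mul, imK_mul, imVec,
    cross_apply, cons_eq_zero_iff, zero_empty, and_true, cons_val_zero, cons_val_one,
    cons_val_two, head_cons, tail_cons]
  constructor
  · rintro ⟨-, hI, hJ, hK⟩
    refine ⟨mul_left_cancel₀ two_ne_zero ?_, mul_left_cancel₀ two_ne_zero ?_,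
      mul_left_cancel₀ two_ne_zero ?_⟩
    · linear_combination hI
    · linear_combination hJ
    · linear_combination hK
  · rintro ⟨hI, hJ, hK⟩
    exact ⟨by ring, by linear_combination 2 * hI, by linear_combination 2 * hJ,
      by linear_combination 2 * hK⟩

theorem im_eq_zero_of_commute_of_not_commute {a p q : ℍ[R]} (hp : Commute a p)
    (hq : Commute a q) (hpq : ¬Commute p q) : a.im = 0 := by
  by_contra ha
  rw [commute_iff_imVec_cross_eq_zero] at hp hq hpq
  exact hpq (cross_eq_zero_of_cross_eq_zero (mt imVec_eq_zero_iff.mp ha) hp hq)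

end Quaternion

theorem conj_cocycle_eq_of_central {G A : Type*} [Group G] [DivisionRing A] {ρ : G →* A}
    {ξ : G → A} (hcoc : ∀ g h : G, ξ (g * h) = ξ g + ρ g * ξ h * (ρ g)⁻¹) {c : G}
    (hc : ∀ g : G, c * g = g * c) (hρc : ∀ x : A, Commute (ρ c) x) (g : G) :
    ρ g * ξ c * (ρ g)⁻¹ = ξ c := by
  have hconj_c : ρ c * ξ g * (ρ c)⁻¹ = ξ g := by
    rw [(hρc _).eq, mul_inv_cancel_right₀ ((Group.isUnit c).map ρ).ne_zero]
  refine add_left_cancel (a := ξ g) ?_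
  rw [← hcoc, ← hc, hcoc, hconj_c, add_comm]

/-- su(2) is realized as the purely imaginary quaternions and `Ad_u v` as `u * v * u⁻¹`. -/
theorem cocycle_at_central_element_general {G : Type*} [Group G]
    (ρ : G →* Quaternion ℝ)
    (ξ : G → Quaternion ℝ) (hξim : ∀ g, (ξ g).re = 0)
    (hcoc : ∀ g h : G, ξ (g * h) = ξ g + ρ g * ξ h * (ρ g)⁻¹)
    (c : G) (hc : ∀ g : G, c * g = g * c)
    (hnonab : ∃ g h : G, ρ g * ρ h ≠ ρ h * ρ g) :
    (∀ g : G, ρ g * ξ c * (ρ g)⁻¹ = ξ c) ∧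
    ((ρ c = 1 ∨ ρ c = -1) → ξ c = 0) := by
  obtain ⟨g₀, h₀, hgh⟩ := hnonab
  have eq_re_of_commute {a : Quaternion ℝ} (ha : ∀ g, Commute (ρ g) a) : a = a.re := by
    conv_lhs => rw [← Quaternion.re_add_im a, Quaternion.im_eq_zero_of_commute_of_not_commute
      (ha g₀).symm (ha h₀).symm hgh, add_zero]
  have hρc : ∀ x, Commute (ρ c) x := by
    rw [eq_re_of_commute (a := ρ c) fun g => by rw [commute_iff_eq, ← map_mul, ← map_mul, hc]]
    exact Quaternion.coe_commute _
  have hfix := conj_cocycle_eq_of_central hcoc hc hρc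
  refine ⟨hfix, fun _ => ?_⟩
  have hξc : ∀ g, Commute (ρ g) (ξ c) := fun g =>
    (mul_inv_eq_iff_eq_mul₀ ((Group.isUnit g).map ρ).ne_zero).mp (hfix g)
  rw [eq_re_of_commute hξc, hξim, Quaternion.coe_zero]

/-- Let `ρ : G → SU(2)` be a homomorphism (SU(2) realized as the unit quaternions) and
`ξ : G → su(2)` a cocycle at `ρ` (su(2) realized as the purely imaginary quaternions),
i.e. `ξ (g*h) = ξ g + Ad_{ρ g} (ξ h)` where `Ad_u v = u * v * u⁻¹`.  If `c ∈ G` is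
central and `ρ` is non-abelian, then `ξ c` is fixed by `Ad_{ρ g}` for every `g`;
moreover, if additionally `ρ c` is central in `SU(2)` (i.e. `ρ c = ±1`), then
`ξ c = 0`. -/
theorem cocycle_at_central_element {G : Type*} [Group G]
    (ρ : G →* Quaternion ℝ) (hρ : ∀ g, ‖ρ g‖ = 1)
    (ξ : G → Quaternion ℝ) (hξim : ∀ g, (ξ g).re = 0)
    (hcoc : ∀ g h : G, ξ (g * h) = ξ g + ρ g * ξ h * (ρ g)⁻¹)
    (c : G) (hc : ∀ g : G, c * g = g * c)
    (hnonab : ∃ g h : G, ρ g * ρ h ≠ ρ h * ρ g) :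
    (∀ g : G, ρ g * ξ c * (ρ g)⁻¹ = ξ c) ∧
    ((ρ c = 1 ∨ ρ c = -1) → ξ c = 0) :=
  cocycle_at_central_element_general ρ ξ hξim hcoc c hc hnonab
end

section
/- Let p, q, r be pairwise coprime integers with 1 < |p| ≤ |q| ≤ |r|, with p and q both odd. Then there exist angles α₁ = π/|p|, α₂ = π/|q|, and α₃ = kπ/|r| for some integer k with 0 < kπ/|r| < π, such that the triangle inequality |α₁ − α₂| ≤ α₃ ≤ α₁ + α₂ holds. In particular, the closed interval [(|q|−|p|)/(|pq|), (|q|+|p|)/(|pq|)] of length 2/|q| contains at least one rational of the form k/|r| with 0 < k/|r| < 1. -/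
open Real

/-!
Since `|r| ≥ |q|`, the step `1/|r|` is at most the length `2/|q|` of the interval
`[1/|p| - 1/|q|, 1/|p| + 1/|q|]`, so the first multiple of `1/|r|` beyond its left endpoint lies
in it. That multiple is positive, and it is below `1` because `1/|p| - 1/|q| < 1/2` and
`1/|r| ≤ 1/2`. Multiplying by `π` gives the angle.
-/

lemma exists_int_div_mem_Ioc (x : ℝ) {R : ℝ} (hR : 0 < R) :
    ∃ k : ℤ, x < k / R ∧ k / R ≤ x + 1 / R := by
  refine ⟨⌊x * R⌋ + 1, ?_, ?_⟩
  · rw [lt_div_iff₀ hR]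
    exact_mod_cast Int.lt_floor_add_one (x * R)
  · rw [div_le_iff₀ hR, add_mul, one_div_mul_cancel hR.ne']
    push_cast
    linarith [Int.floor_le (x * R)]

lemma exists_int_div_mem_Icc_sub_add_inv {P Q R : ℝ} (hP : 2 ≤ P) (hPQ : P ≤ Q)
    (hQR : Q ≤ R) :
    ∃ k : ℤ, 0 < k / R ∧ k / R < 1 ∧ 1 / P - 1 / Q ≤ k / R ∧ k / R ≤ 1 / P + 1 / Q := by
  have hR : 0 < R := by linarith
  have hQP : 1 / Q ≤ 1 / P := one_div_le_one_div_of_le (by linarith) hPQ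
  have hRQ : 1 / R ≤ 1 / Q := one_div_le_one_div_of_le (by linarith) hQR
  have hP2 : 1 / P ≤ 1 / 2 := one_div_le_one_div_of_le two_pos hP
  have hQ : 0 < 1 / Q := one_div_pos.mpr (by linarith)
  obtain ⟨k, hlo, hhi⟩ := exists_int_div_mem_Ioc (1 / P - 1 / Q) hR
  exact ⟨k, by linarith, by linarith, hlo.le, by linarith⟩

theorem exists_triangle_angle_odd_case_general (p q r : ℤ)
    (hp : 1 < |p|) (hq : |p| ≤ |q|) (hr : |q| ≤ |r|) :
    ∃ k : ℤ, 0 < (k : ℝ) * π / abs (r : ℝ) ∧ (k : ℝ) * π / abs (r : ℝ) < π ∧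
      abs (π / abs (p : ℝ) - π / abs (q : ℝ)) ≤ (k : ℝ) * π / abs (r : ℝ) ∧
      (k : ℝ) * π / abs (r : ℝ) ≤ π / abs (p : ℝ) + π / abs (q : ℝ) := by
  have hP : (2 : ℝ) ≤ |(p : ℝ)| := by
    rw [← Int.cast_abs]
    exact_mod_cast hp
  have hPQ : |(p : ℝ)| ≤ |(q : ℝ)| := by
    simpa only [← Int.cast_abs] using Int.cast_le.mpr hq
  have hQR : |(q : ℝ)| ≤ |(r : ℝ)| := by
    simpa only [← Int.cast_abs] using Int.cast_le.mpr hr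
  obtain ⟨k, hpos, hlt, hlo, hhi⟩ := exists_int_div_mem_Icc_sub_add_inv hP hPQ hQR
  have hgap : 0 ≤ 1 / |(p : ℝ)| - 1 / |(q : ℝ)| :=
    sub_nonneg.mpr (one_div_le_one_div_of_le (by linarith) hPQ)
  have hangle : (k : ℝ) * π / |(r : ℝ)| = π * (k / |(r : ℝ)|) := by ring
  have hdiff : π / |(p : ℝ)| - π / |(q : ℝ)| = π * (1 / |(p : ℝ)| - 1 / |(q : ℝ)|) := by ring
  have hsum : π / |(p : ℝ)| + π / |(q : ℝ)| = π * (1 / |(p : ℝ)| + 1 / |(q : ℝ)|) := by ring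
  refine ⟨k, ?_⟩
  rw [hangle, hdiff, hsum, abs_mul, abs_of_pos pi_pos, abs_of_nonneg hgap]
  exact ⟨mul_pos pi_pos hpos, mul_lt_of_lt_one_right pi_pos hlt,
    mul_le_mul_of_nonneg_left hlo pi_pos.le, mul_le_mul_of_nonneg_left hhi pi_pos.le⟩

/-- Let `p, q, r` be pairwise coprime integers with `1 < |p| ≤ |q| ≤ |r|`, with `p` and
`q` both odd.  Then for the angles `α₁ = π/|p|` and `α₂ = π/|q|` there is an angle
`α₃ = kπ/|r|`, for some integer `k` with `0 < kπ/|r| < π`, satisfying the triangle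
inequality `|α₁ − α₂| ≤ α₃ ≤ α₁ + α₂`. -/
theorem exists_triangle_angle_odd_case (p q r : ℤ)
    (hpq : IsCoprime p q) (hpr : IsCoprime p r) (hqr : IsCoprime q r)
    (hp : 1 < |p|) (hq : |p| ≤ |q|) (hr : |q| ≤ |r|)
    (hpodd : Odd p) (hqodd : Odd q) :
    ∃ k : ℤ, 0 < (k : ℝ) * π / abs (r : ℝ) ∧ (k : ℝ) * π / abs (r : ℝ) < π ∧
      abs (π / abs (p : ℝ) - π / abs (q : ℝ)) ≤ (k : ℝ) * π / abs (r : ℝ) ∧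
      (k : ℝ) * π / abs (r : ℝ) ≤ π / abs (p : ℝ) + π / abs (q : ℝ) :=
  exists_triangle_angle_odd_case_general p q r hp hq hr
end

section
/- Let z₁ = j and z₂ = j·e^{iα} with α ∉ πℤ, and consider the linear map Φ : ℝ³ → z₁^⊥ ⊕ z₂^⊥ sending ζ ↦ ((1 − Ad_{z₁})ζ, (1 − Ad_{z₂})ζ), where su(2) ≅ ℝ³ with z₁, z₂ both perpendicular to i. Then Φ is injective with image exactly the set of pairs (λ, μ) with ⟨λ, i⟩ = ⟨μ, i⟩; in particular the image has dimension 3 inside the 4-dimensional space z₁^⊥ ⊕ z₂^⊥. -/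
/-!
On imaginary quaternions, `Ad_z` for a unit imaginary `z` is the rotation by `π` about `z`, so
`ζ - z ζ z⁻¹ = 2 (ζ - ⟪ζ, z⟫ z)` is twice the orthogonal projection onto `z^⊥`. Hence its
kernel is `ℝ z`, and when `z ⊥ i` it doubles the `i`-component. For two non-parallel axes
`z, w ⊥ i` the kernels `ℝ z` and `ℝ w` meet in `0`, which gives injectivity; and a pair
`(λ, μ)` is attained by `ζ = (λ + a z) / 2 = (μ + b w) / 2` exactly when `λ - μ` lies in
`span(z, w) = i^⊥`, i.e. when `λ` and `μ` have the same `i`-component.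
-/

open Quaternion

namespace Quaternion

variable {z ζ : ℍ[ℝ]}

theorem inv_eq_neg_of_re_eq_zero (hz : z.re = 0) (hz1 : normSq z = 1) : z⁻¹ = -z := by
  refine inv_eq_of_mul_eq_one_right ?_
  rw [mul_neg, ← sq, sq_eq_neg_normSq.2 hz, hz1, neg_neg, coe_one]

theorem sub_mul_mul_inv_eq_two_smul (hz : z.re = 0) (hz1 : normSq z = 1) (hζ : ζ.re = 0) :
    ζ - z * ζ * z⁻¹ = (2 : ℝ) • (ζ - inner ℝ ζ z • z) := by
  rw [inv_eq_neg_of_re_eq_zero hz hz1, inner_def]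
  rw [normSq_def', hz] at hz1
  ext
  · simp [hz, hζ]; ring
  · simp [hz, hζ]; linear_combination ζ.imI * hz1
  · simp [hz, hζ]; linear_combination ζ.imJ * hz1
  · simp [hz, hζ]; linear_combination ζ.imK * hz1

theorem sub_mul_mul_inv_eq_zero_iff (hz : z.re = 0) (hz1 : normSq z = 1) (hζ : ζ.re = 0) :
    ζ - z * ζ * z⁻¹ = 0 ↔ ζ = inner ℝ ζ z • z := by
  rw [sub_mul_mul_inv_eq_two_smul hz hz1 hζ, smul_eq_zero, sub_eq_zero]
  simp

theorem imI_sub_mul_mul_inv (hz : z.re = 0) (hz1 : normSq z = 1) (hzI : z.imI = 0)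
    (hζ : ζ.re = 0) : (ζ - z * ζ * z⁻¹).imI = 2 * ζ.imI := by
  simp [sub_mul_mul_inv_eq_two_smul hz hz1 hζ, hzI]

theorem sub_mul_mul_inv_half_add_smul (hz : z.re = 0) (hz1 : normSq z = 1) {lam : ℍ[ℝ]}
    (hlam : lam.re = 0) (hlamz : inner ℝ lam z = 0) (a : ℝ) :
    (2⁻¹ : ℝ) • (lam + a • z) - z * ((2⁻¹ : ℝ) • (lam + a • z)) * z⁻¹ = lam := by
  have hre : ((2⁻¹ : ℝ) • (lam + a • z)).re = 0 := by simp [hlam, hz]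
  have hinner : inner ℝ ((2⁻¹ : ℝ) • (lam + a • z)) z = 2⁻¹ * a := by
    rw [real_inner_smul_left, inner_add_left, hlamz, real_inner_smul_left,
      Quaternion.inner_self, hz1]
    ring
  rw [sub_mul_mul_inv_eq_two_smul hz hz1 hre, hinner]
  module

theorem eq_of_sub_mul_mul_inv_eq {z w ζ ζ' : ℍ[ℝ]} (hz : z.re = 0) (hz1 : normSq z = 1)
    (hw : w.re = 0) (hw1 : normSq w = 1) (hdet : z.imJ * w.imK - z.imK * w.imJ ≠ 0)
    (hζ : ζ.re = 0) (hζ' : ζ'.re = 0)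
    (hz_eq : ζ - z * ζ * z⁻¹ = ζ' - z * ζ' * z⁻¹)
    (hw_eq : ζ - w * ζ * w⁻¹ = ζ' - w * ζ' * w⁻¹) : ζ = ζ' := by
  set δ := ζ - ζ'
  have hδ : δ.re = 0 := by simp [δ, hζ, hζ']
  have hδz : δ = inner ℝ δ z • z := (sub_mul_mul_inv_eq_zero_iff hz hz1 hδ).1 <| by
    simp only [δ]; linear_combination (norm := noncomm_ring) hz_eq
  have hδw : δ = inner ℝ δ w • w := (sub_mul_mul_inv_eq_zero_iff hw hw1 hδ).1 <| by
    simp only [δ]; linear_combination (norm := noncomm_ring) hw_eq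
  have hJ := congrArg QuaternionAlgebra.imJ (hδz.symm.trans hδw)
  have hK := congrArg QuaternionAlgebra.imK (hδz.symm.trans hδw)
  simp only [imJ_smul, imK_smul, smul_eq_mul] at hJ hK
  have ha : inner ℝ δ z = 0 := by
    refine (mul_eq_zero.1 ?_).resolve_right hdet
    linear_combination w.imK * hJ - w.imJ * hK
  exact sub_eq_zero.1 (hδz.trans (by rw [ha, zero_smul]))

theorem exists_sub_mul_mul_inv_eq_iff {z w lam mu : ℍ[ℝ]} (hz : z.re = 0) (hz1 : normSq z = 1)
    (hzI : z.imI = 0) (hw : w.re = 0) (hw1 : normSq w = 1) (hwI : w.imI = 0)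
    (hdet : z.imJ * w.imK - z.imK * w.imJ ≠ 0) (hlam : lam.re = 0) (hmu : mu.re = 0)
    (hlamz : inner ℝ lam z = 0) (hmuw : inner ℝ mu w = 0) :
    (∃ ζ : ℍ[ℝ], ζ.re = 0 ∧ ζ - z * ζ * z⁻¹ = lam ∧ ζ - w * ζ * w⁻¹ = mu) ↔
      lam.imI = mu.imI := by
  constructor
  · rintro ⟨ζ, hζ, rfl, rfl⟩
    rw [imI_sub_mul_mul_inv hz hz1 hzI hζ, imI_sub_mul_mul_inv hw hw1 hwI hζ]
  · intro hI
    -- Cramer's rule for `b • w - a • z = lam - mu` in the plane `i^⊥`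
    set D := z.imJ * w.imK - z.imK * w.imJ
    set a := ((lam.imK - mu.imK) * w.imJ - (lam.imJ - mu.imJ) * w.imK) / D
    set b := ((lam.imK - mu.imK) * z.imJ - (lam.imJ - mu.imJ) * z.imK) / D
    have ha : a * D = (lam.imK - mu.imK) * w.imJ - (lam.imJ - mu.imJ) * w.imK :=
      div_mul_cancel₀ _ hdet
    have hb : b * D = (lam.imK - mu.imK) * z.imJ - (lam.imJ - mu.imJ) * z.imK :=
      div_mul_cancel₀ _ hdet
    have hab : lam + a • z = mu + b • w := by
      ext
      · simp [hlam, hmu, hz, hw]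
      · simp [hI, hzI, hwI]
      · refine mul_right_cancel₀ hdet ?_
        simp only [imJ_add, imJ_smul, smul_eq_mul]
        linear_combination z.imJ * ha - w.imJ * hb
      · refine mul_right_cancel₀ hdet ?_
        simp only [imK_add, imK_smul, smul_eq_mul]
        linear_combination z.imK * ha - w.imK * hb
    refine ⟨(2⁻¹ : ℝ) • (lam + a • z), by simp [hlam, hz],
      sub_mul_mul_inv_half_add_smul hz hz1 hlam hlamz a, ?_⟩
    rw [hab]
    exact sub_mul_mul_inv_half_add_smul hw hw1 hmu hmuw b

end Quaternion

/-- Let `z₁ = j` and `z₂ = j·e^{iα}` with `sin α ≠ 0` (i.e. `α ∉ πℤ`), both imaginary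
unit quaternions perpendicular to `i`, and consider the linear map
`Φ : ℝ³ → z₁^⊥ ⊕ z₂^⊥`, `ζ ↦ ((1 − Ad_{z₁})ζ, (1 − Ad_{z₂})ζ)` on `su(2) ≅ ℝ³` (the
imaginary quaternions), where `Ad_z ζ = z ζ z⁻¹`.  Then `Φ` is injective, and its image
is exactly the set of pairs `(λ, μ)` (with `λ ⊥ z₁`, `μ ⊥ z₂`) satisfying
`⟨λ, i⟩ = ⟨μ, i⟩`; in particular the image is 3-dimensional inside the 4-dimensional
space `z₁^⊥ ⊕ z₂^⊥`. -/
theorem coboundary_image_characterisation (α : ℝ) (hα : Real.sin α ≠ 0)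
    (J eIα : Quaternion ℝ)
    (hJ : J.re = 0 ∧ J.imI = 0 ∧ J.imJ = 1 ∧ J.imK = 0)
    (heI : eIα.re = Real.cos α ∧ eIα.imI = Real.sin α ∧ eIα.imJ = 0 ∧ eIα.imK = 0) :
    (∀ ζ ζ' : Quaternion ℝ, ζ.re = 0 → ζ'.re = 0 →
        ζ - J * ζ * J⁻¹ = ζ' - J * ζ' * J⁻¹ →
        ζ - (J * eIα) * ζ * (J * eIα)⁻¹ = ζ' - (J * eIα) * ζ' * (J * eIα)⁻¹ →
        ζ = ζ') ∧
    (∀ lam mu : Quaternion ℝ, lam.re = 0 → mu.re = 0 →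
        (inner ℝ lam J : ℝ) = 0 → (inner ℝ mu (J * eIα) : ℝ) = 0 →
        ((∃ ζ : Quaternion ℝ, ζ.re = 0 ∧
            ζ - J * ζ * J⁻¹ = lam ∧
            ζ - (J * eIα) * ζ * (J * eIα)⁻¹ = mu) ↔ lam.imI = mu.imI)) := by
  obtain ⟨hJre, hJI, hJJ, hJK⟩ := hJ
  obtain ⟨heRe, heI, heJ, heK⟩ := heI
  have hJ1 : normSq J = 1 := by simp [normSq_def', hJre, hJI, hJJ, hJK]
  have hP1 : normSq (J * eIα) = 1 := by
    rw [map_mul, hJ1, one_mul, normSq_def', heRe, heI, heJ, heK]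
    linear_combination Real.cos_sq_add_sin_sq α
  have hPre : (J * eIα).re = 0 := by simp [hJre, hJI, hJJ, hJK, heJ, heK]
  have hPI : (J * eIα).imI = 0 := by simp [hJre, hJI, hJJ, hJK, heJ, heK]
  have hdet : J.imJ * (J * eIα).imK - J.imK * (J * eIα).imJ ≠ 0 := by
    simpa [hJre, hJI, hJJ, hJK, heJ, heK, heI] using hα
  exact ⟨fun ζ ζ' hζ hζ' ↦ eq_of_sub_mul_mul_inv_eq hJre hJ1 hPre hP1 hdet hζ hζ',
    fun lam mu hlam hmu hlamJ hmuP ↦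
      exists_sub_mul_mul_inv_eq_iff hJre hJ1 hJI hPre hP1 hPI hdet hlam hmu hlamJ hmuP⟩
end
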